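/- arXiv:1503.08562 — 4 statements merged into one kernel-verified Lean document; each statement's English description precedes it below -/
import Mathlib

section
/- Let (ω_j)_{j=1..D} be independent standard Gaussian random variables, ν_j, v_j real numbers, Z_j = ν_j + v_j ω_j, T = Σ_{j=1}^D Z_j², and Σ = Σ_{j=1}^D v_j⁴ + 2 Σ_{j=1}^D v_j² ν_j². Then for all x > 0, P(T − E[T] > 2√(Σx) + 2x·max_{1≤j≤D} v_j²) ≤ exp(−x). -/
/-!
Chernoff's method. For a standard Gaussian `g`, `E exp (t (m + w g)²)` is explicit by completing
the square, and the elementary bound `-log (1 - u) ≤ u + u² / (2 (1 - u))` turns it into a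
sub-gamma bound for `(m + w g)² - (m² + w²)` with variance factor `2 (w⁴ + 2 w² m²)` and
scale `2 w²`. Variance factors add over independent summands, the scales are dominated by
`2 max_j v_j²`, and the Chernoff bound for a sub-gamma variable gives the tail.
-/

open MeasureTheory ProbabilityTheory Real

lemma neg_log_one_sub_le {u : ℝ} (h0 : 0 ≤ u) (h1 : u < 1) :
    -log (1 - u) ≤ u + u ^ 2 / (2 * (1 - u)) := by
  have hu : 0 < 1 - u := by linarith
  have hlog : ∫ t in (0 : ℝ)..u, (1 - t)⁻¹ = -log (1 - u) := by
    rw [intervalIntegral.integral_comp_sub_left (fun s => s⁻¹) 1, sub_zero,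
      integral_inv_of_pos hu one_pos, log_div one_ne_zero hu.ne', log_one, zero_sub]
  have hpoly : ∫ t in (0 : ℝ)..u, (1 + t / (1 - u)) = u + u ^ 2 / (2 * (1 - u)) := by
    rw [intervalIntegral.integral_add intervalIntegrable_const
      (intervalIntegral.intervalIntegrable_id.div_const _), intervalIntegral.integral_div,
      integral_id]
    simp [div_div]
  rw [← hlog, ← hpoly]
  have hcont : Continuous fun t : ℝ => 1 + t / (1 - u) := by fun_prop
  refine intervalIntegral.integral_mono_on h0 ?_ (hcont.intervalIntegrable _ _) fun t ht => ?_
  · refine ContinuousOn.intervalIntegrable (ContinuousOn.inv₀ (by fun_prop) fun t ht => ?_)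
    rw [Set.uIcc_of_le h0] at ht
    linarith [ht.2]
  · have h1t : 0 < 1 - t := by linarith [ht.2]
    calc (1 - t)⁻¹ = 1 + t / (1 - t) := by field_simp; ring
      _ ≤ 1 + t / (1 - u) := by gcongr; exacts [ht.1, ht.2]

lemma integral_exp_mul_sq_affine_gaussianReal {m w t : ℝ} (h : 2 * w ^ 2 * t < 1) :
    ∫ y, exp (t * (m + w * y) ^ 2) ∂gaussianReal 0 1
      = exp (t * m ^ 2 / (1 - 2 * w ^ 2 * t)) / √(1 - 2 * w ^ 2 * t) := by
  set a := 1 - 2 * w ^ 2 * t with ha_def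
  have ha : 0 < a := by linarith
  have hsq (y : ℝ) : gaussianPDFReal 0 1 y • exp (t * (m + w * y) ^ 2)
      = (√(2 * π))⁻¹
        * (exp (t * m ^ 2 / a) * exp (-(a / 2) * (y - 2 * t * m * w / a) ^ 2)) := by
    rw [gaussianPDFReal, smul_eq_mul, NNReal.coe_one, mul_one, mul_assoc, ← exp_add, ← exp_add]
    congr 2
    field_simp
    rw [ha_def]
    ring
  rw [integral_gaussianReal_eq_integral_smul one_ne_zero, integral_congr_ae (ae_of_all _ hsq),
    integral_const_mul, integral_const_mul,
    integral_sub_right_eq_self (fun y => exp (-(a / 2) * y ^ 2)),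
    integral_gaussian, show π / (a / 2) = 2 * π / a by field_simp, sqrt_div (by positivity)]
  field_simp

lemma exp_div_sqrt_mul_exp_le {m w t : ℝ} (ht : 0 ≤ t) (h : 2 * w ^ 2 * t < 1) :
    exp (t * m ^ 2 / (1 - 2 * w ^ 2 * t)) / √(1 - 2 * w ^ 2 * t) * exp (t * -(m ^ 2 + w ^ 2))
      ≤ exp (t ^ 2 * (2 * (w ^ 4 + 2 * w ^ 2 * m ^ 2)) / (2 * (1 - 2 * w ^ 2 * t))) := by
  set u := 2 * w ^ 2 * t with hu
  have hu0 : 0 ≤ u := by positivity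
  have hu1 : 0 < 1 - u := by linarith
  rw [sqrt_eq_rpow, rpow_def_of_pos hu1, div_eq_mul_inv, ← exp_neg, ← exp_add, ← exp_add,
    exp_le_exp]
  have hexp : t * m ^ 2 / (1 - u) + -(log (1 - u) * (1 / 2)) + t * -(m ^ 2 + w ^ 2)
      = t ^ 2 * (2 * (w ^ 4 + 2 * w ^ 2 * m ^ 2)) / (2 * (1 - u))
        + (-log (1 - u) - (u + u ^ 2 / (2 * (1 - u)))) / 2 := by
    field_simp
    rw [hu]
    ring
  linarith [neg_log_one_sub_le hu0 (by linarith : u < 1)]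

namespace ProbabilityTheory

variable {Ω : Type*} {mΩ : MeasurableSpace Ω} {μ : Measure Ω} {X : Ω → ℝ} {v c : ℝ}

/-- Right-tail sub-gamma condition with variance factor `v` and scale `c`
(Boucheron–Lugosi–Massart, *Concentration Inequalities*, §2.4). -/
structure HasSubgammaMGF (X : Ω → ℝ) (v c : ℝ) (μ : Measure Ω) : Prop where
  integrable_exp_mul : ∀ t, 0 < t → c * t < 1 → Integrable (fun ω ↦ exp (t * X ω)) μ
  mgf_le : ∀ t, 0 < t → c * t < 1 → mgf X μ t ≤ exp (t ^ 2 * v / (2 * (1 - c * t)))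

namespace HasSubgammaMGF

lemma mono_scale {c' : ℝ} (h : HasSubgammaMGF X v c μ) (hv : 0 ≤ v) (hc : c ≤ c') :
    HasSubgammaMGF X v c' μ := by
  have hct {t : ℝ} (ht : 0 < t) (hct : c' * t < 1) : c * t < 1 :=
    (mul_le_mul_of_nonneg_right hc ht.le).trans_lt hct
  refine ⟨fun t ht h' => h.integrable_exp_mul t ht (hct ht h'), fun t ht h' => ?_⟩
  refine (h.mgf_le t ht (hct ht h')).trans (exp_le_exp.2 ?_)
  gcongr

lemma of_map {Ω' : Type*} {mΩ' : MeasurableSpace Ω'} {μ : Measure Ω'} {Y : Ω' → Ω}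
    (hY : AEMeasurable Y μ) (h : HasSubgammaMGF X v c (μ.map Y)) :
    HasSubgammaMGF (X ∘ Y) v c μ where
  integrable_exp_mul t ht hct := by
    have hint := h.integrable_exp_mul t ht hct
    rwa [integrable_map_measure hint.aestronglyMeasurable hY] at hint
  mgf_le t ht hct := by
    rw [← mgf_map hY (h.integrable_exp_mul t ht hct).aestronglyMeasurable]
    exact h.mgf_le t ht hct

lemma measure_lt_le [IsFiniteMeasure μ] (h : HasSubgammaMGF X v c μ) (hv : 0 < v)
    (hc : 0 ≤ c) {x : ℝ} (hx : 0 < x) :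
    μ {ω | √(2 * v * x) + c * x < X ω} ≤ ENNReal.ofReal (exp (-x)) := by
  obtain ⟨a, ha, rfl⟩ : ∃ a > 0, v = 2 * a ^ 2 :=
    ⟨√(v / 2), by positivity, by rw [sq_sqrt (by positivity)]; ring⟩
  obtain ⟨y, hy, rfl⟩ : ∃ y > 0, x = y ^ 2 := ⟨√x, sqrt_pos.2 hx, (sq_sqrt hx.le).symm⟩
  have hsqrt : √(2 * (2 * a ^ 2) * y ^ 2) = 2 * a * y := by
    rw [show 2 * (2 * a ^ 2) * y ^ 2 = (2 * a * y) ^ 2 by ring, sqrt_sq (by positivity)]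
  rw [hsqrt]
  -- the optimal Chernoff parameter
  set t := y / (a + c * y) with ht_def
  have ht : 0 < t := by positivity
  have hct : 1 - c * t = a / (a + c * y) := by rw [ht_def]; field_simp; ring
  have hexp : -t * (2 * a * y + c * y ^ 2) + t ^ 2 * (2 * a ^ 2) / (2 * (1 - c * t)) = -y ^ 2 := by
    rw [hct, ht_def]; field_simp; ring
  have hct' : c * t < 1 := by linarith [show 0 < a / (a + c * y) by positivity]
  calc μ {ω | 2 * a * y + c * y ^ 2 < X ω}
      ≤ μ {ω | 2 * a * y + c * y ^ 2 ≤ X ω} :=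
        measure_mono (Set.ofPred_subset_ofPred.2 fun _ => le_of_lt)
    _ = ENNReal.ofReal (μ.real {ω | 2 * a * y + c * y ^ 2 ≤ X ω}) := (ofReal_measureReal).symm
    _ ≤ ENNReal.ofReal (exp (-y ^ 2)) := by
      refine ENNReal.ofReal_le_ofReal ((measure_ge_le_exp_mul_mgf _ ht.le
        (h.integrable_exp_mul t ht hct')).trans ?_)
      rw [← hexp, exp_add]
      gcongr
      exact h.mgf_le t ht hct'

end HasSubgammaMGF

lemma iIndepFun.hasSubgammaMGF_sum {ι : Type*} {X : ι → Ω → ℝ} {v : ι → ℝ}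
    (h_indep : iIndepFun X μ) (h_meas : ∀ i, AEMeasurable (X i) μ) (s : Finset ι)
    (h : ∀ i ∈ s, HasSubgammaMGF (X i) (v i) c μ) :
    HasSubgammaMGF (∑ i ∈ s, X i) (∑ i ∈ s, v i) c μ := by
  have := h_indep.isProbabilityMeasure
  refine ⟨fun t ht hct => mgf_pos_iff.mp ?_, fun t ht hct => ?_⟩
  · rw [h_indep.mgf_sum₀ h_meas]
    exact Finset.prod_pos fun i hi => mgf_pos ((h i hi).integrable_exp_mul t ht hct)
  · rw [h_indep.mgf_sum₀ h_meas, Finset.mul_sum, Finset.sum_div, exp_sum]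
    exact Finset.prod_le_prod (fun i _ => mgf_nonneg) fun i hi => (h i hi).mgf_le t ht hct

lemma hasSubgammaMGF_sq_affine_gaussianReal (m w : ℝ) :
    HasSubgammaMGF (fun y => (m + w * y) ^ 2 - (m ^ 2 + w ^ 2))
      (2 * (w ^ 4 + 2 * w ^ 2 * m ^ 2)) (2 * w ^ 2) (gaussianReal 0 1) := by
  have hmgf {t : ℝ} (h : 2 * w ^ 2 * t < 1) :
      mgf (fun y => (m + w * y) ^ 2 - (m ^ 2 + w ^ 2)) (gaussianReal 0 1) t
        = exp (t * m ^ 2 / (1 - 2 * w ^ 2 * t)) / √(1 - 2 * w ^ 2 * t)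
          * exp (t * -(m ^ 2 + w ^ 2)) := by
    simp_rw [sub_eq_add_neg (_ ^ 2)]
    rw [mgf_add_const, mgf, integral_exp_mul_sq_affine_gaussianReal h]
  refine ⟨fun t _ h => mgf_pos_iff.mp ?_, fun t ht h => ?_⟩
  · rw [hmgf h]
    have : 0 < √(1 - 2 * w ^ 2 * t) := sqrt_pos.2 (by linarith)
    positivity
  · rw [hmgf h]
    exact exp_div_sqrt_mul_exp_le ht.le h

lemma iIndepFun.hasSubgammaMGF_sum_sq_affine {ι : Type*} [Fintype ι] {g : ι → Ω → ℝ}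
    (h_indep : iIndepFun g μ) (hg : ∀ i, μ.map (g i) = gaussianReal 0 1) (m w : ι → ℝ)
    {c : ℝ} (hc : ∀ i, 2 * w i ^ 2 ≤ c) :
    HasSubgammaMGF (fun ω => ∑ i, ((m i + w i * g i ω) ^ 2 - (m i ^ 2 + w i ^ 2)))
      (∑ i, 2 * (w i ^ 4 + 2 * w i ^ 2 * m i ^ 2)) c μ := by
  have hmeas (i : ι) : AEMeasurable (g i) μ :=
    aemeasurable_of_map_neZero (by rw [hg i]; infer_instance)
  have hsq (i : ι) : Measurable fun y => (m i + w i * y) ^ 2 - (m i ^ 2 + w i ^ 2) := by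
    fun_prop
  have hsum := (h_indep.comp _ hsq).hasSubgammaMGF_sum
    (fun i => (hsq i).comp_aemeasurable (hmeas i)) Finset.univ fun i _ =>
      (HasSubgammaMGF.of_map (hmeas i) (hg i ▸ hasSubgammaMGF_sq_affine_gaussianReal (m i) (w i))
        ).mono_scale (by positivity) (hc i)
  rwa [Finset.sum_fn] at hsum

end ProbabilityTheory

theorem chi_square_upper_deviation
    {Ω : Type*} [MeasureSpace Ω] (μ : Measure Ω) [IsProbabilityMeasure μ]
    (D : ℕ) (hD : 0 < D) (ω : Fin D → Ω → ℝ) (ν v : Fin D → ℝ)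
    (hindep : iIndepFun ω μ)
    (hlaw : ∀ j, Measure.map (ω j) μ = gaussianReal 0 1)
    (T : Ω → ℝ) (hT : ∀ a, T a = ∑ j, (ν j + v j * ω j a) ^ 2)
    (S : ℝ) (hS : S = ∑ j, (v j) ^ 4 + 2 * ∑ j, (v j) ^ 2 * (ν j) ^ 2)
    (x : ℝ) (hx : 0 < x) :
    μ {a | T a - (∑ j, ((ν j) ^ 2 + (v j) ^ 2)) >
        2 * Real.sqrt (S * x) +
          2 * x * Finset.univ.sup' ⟨⟨0, hD⟩, Finset.mem_univ _⟩ (fun j => (v j) ^ 2)} ≤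
      ENNReal.ofReal (Real.exp (-x)) := by
  set B := Finset.univ.sup' ⟨⟨0, hD⟩, Finset.mem_univ _⟩ (fun j => (v j) ^ 2)
  have hvB (j : Fin D) : v j ^ 2 ≤ B := Finset.le_sup' (fun j => v j ^ 2) (Finset.mem_univ j)
  rcases (show 0 ≤ S by rw [hS]; positivity).eq_or_lt with hS0 | hSpos
  · have hv (j : Fin D) : v j = 0 := by
      have := Finset.single_le_sum (f := fun j => v j ^ 4) (fun j _ => by positivity)
        (Finset.mem_univ j)
      have : 0 ≤ ∑ j, v j ^ 2 * ν j ^ 2 := by positivity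
      exact pow_eq_zero_iff four_ne_zero |>.1 (le_antisymm (by linarith) (by positivity))
    have hB : B = 0 := le_antisymm (Finset.sup'_le _ _ fun j _ => by simp [hv])
      (by simpa [hv] using hvB ⟨0, hD⟩)
    simp [hT, hv, ← hS0, hB]
  · have hsubgamma := hindep.hasSubgammaMGF_sum_sq_affine hlaw ν v (c := 2 * B)
      fun j => by linarith [hvB j]
    have hS' : ∑ j, 2 * (v j ^ 4 + 2 * v j ^ 2 * ν j ^ 2) = 2 * S := by
      simp only [hS, Finset.mul_sum, ← Finset.sum_add_distrib]
      ring_nf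
    have hsqrt : √(2 * (2 * S) * x) = 2 * √(S * x) := by
      rw [show 2 * (2 * S) * x = 2 ^ 2 * (S * x) by ring, sqrt_mul' _ (by positivity),
        sqrt_sq zero_le_two]
    have hB : 0 ≤ 2 * B := by linarith [hvB ⟨0, hD⟩, sq_nonneg (v ⟨0, hD⟩)]
    convert (hS' ▸ hsubgamma).measure_lt_le (by positivity) hB hx using 3
    funext a
    rw [hsqrt, gt_iff_lt, mul_right_comm 2 x B, hT, ← Finset.sum_sub_distrib]
end

section
/- Let (ω_j)_{j=1..D} be independent standard Gaussian random variables, ν_j, v_j real numbers, Z_j = ν_j + v_j ω_j, T = Σ_{j=1}^D Z_j², and Σ = Σ_{j=1}^D v_j⁴ + 2 Σ_{j=1}^D v_j² ν_j². Then for all x > 0, P(T − E[T] < −2√(Σx)) ≤ exp(−x). -/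
/-!
Chernoff bound for the lower tail. For a Gaussian `ω` and `c ≥ 0`, completing the square gives
`E exp(-c (ν + w ω)²) = exp(-c ν² / (1 + 2 c w²)) / √(1 + 2 c w²)`; by `1 / (1 + u) ≥ 1 - u` and
`log (1 + u) ≥ u - u² / 2` this is at most `exp(-c E[(ν + w ω)²] + c² (w⁴ + 2 w² ν²))`.
Independence multiplies these bounds into `E exp(-c (T - E T)) ≤ exp(c² Σ)`, and Markov's inequality
with `c = √(x / Σ)` turns the deviation `2 √(Σ x)` into the probability bound `exp(-x)`.
-/

open MeasureTheory ProbabilityTheory Real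

lemma Real.sub_log_one_add_le_sq_div_two {u : ℝ} (hu : 0 ≤ u) : u - log (1 + u) ≤ u ^ 2 / 2 := by
  have h := le_log_one_add_of_nonneg hu
  have : u - 2 * u / (u + 2) = u ^ 2 / (u + 2) := by field_simp; ring
  have : u ^ 2 / (u + 2) ≤ u ^ 2 / 2 :=
    div_le_div_of_nonneg_left (sq_nonneg u) two_pos (by linarith)
  linarith

lemma integral_exp_neg_mul_sq_affine_gaussianReal {c ν w : ℝ} (h : 0 < 1 + 2 * c * w ^ 2) :
    ∫ y, exp (-(c * (ν + w * y) ^ 2)) ∂gaussianReal 0 1 =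
      exp (-(c * ν ^ 2) / (1 + 2 * c * w ^ 2)) / √(1 + 2 * c * w ^ 2) := by
  set a := 1 + 2 * c * w ^ 2 with ha
  have complete_square (y : ℝ) : gaussianPDFReal 0 1 y • exp (-(c * (ν + w * y) ^ 2)) =
      (√(2 * π))⁻¹ * exp (-(c * ν ^ 2) / a) * exp (-(a / 2) * (y + 2 * c * ν * w / a) ^ 2) := by
    simp only [gaussianPDFReal_def, NNReal.coe_one, smul_eq_mul, mul_assoc, ← exp_add]
    congr 2
    · simp
    · field_simp
      rw [ha]
      ring
  have hπ : √(π / (a / 2)) = √(2 * π) / √a := by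
    rw [← sqrt_div (by positivity)]
    congr 1
    field_simp
  simp_rw [integral_gaussianReal_eq_integral_smul one_ne_zero, complete_square,
    integral_const_mul, integral_add_right_eq_self (fun y ↦ exp (-(a / 2) * y ^ 2)),
    integral_gaussian, hπ]
  field_simp

lemma exp_neg_div_div_sqrt_le {c ν w : ℝ} (hc : 0 ≤ c) :
    exp (-(c * ν ^ 2) / (1 + 2 * c * w ^ 2)) / √(1 + 2 * c * w ^ 2) ≤
      exp (-c * (ν ^ 2 + w ^ 2) + c ^ 2 * (w ^ 4 + 2 * w ^ 2 * ν ^ 2)) := by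
  set u := 2 * c * w ^ 2 with hu_def
  have hu : 0 ≤ u := by positivity
  have h1u : 0 < 1 + u := by linarith
  rw [← exp_log (sqrt_pos.2 h1u), log_sqrt h1u.le, ← exp_sub, exp_le_exp]
  have hfrac : c * ν ^ 2 * (1 - u) ≤ c * ν ^ 2 / (1 + u) := by
    rw [le_div_iff₀ h1u]
    nlinarith [mul_nonneg (mul_nonneg hc (sq_nonneg ν)) (mul_nonneg hu hu)]
  have hlog := Real.sub_log_one_add_le_sq_div_two hu
  rw [hu_def] at hfrac hlog ⊢
  rw [neg_div]
  linarith

section GaussianSquares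

variable {Ω : Type*} [MeasurableSpace Ω] {μ : Measure Ω}

lemma aemeasurable_of_map_eq_gaussianReal {ξ : Ω → ℝ} {m : ℝ} {s : NNReal}
    (hξ : μ.map ξ = gaussianReal m s) : AEMeasurable ξ μ :=
  .of_map_ne_zero (hξ ▸ IsProbabilityMeasure.ne_zero _)

lemma mgf_neg_sq_affine_le {ξ : Ω → ℝ} (hξ : μ.map ξ = gaussianReal 0 1) (ν w : ℝ) {c : ℝ}
    (hc : 0 ≤ c) :
    mgf (fun a ↦ (ν + w * ξ a) ^ 2) μ (-c) ≤
      exp (-c * (ν ^ 2 + w ^ 2) + c ^ 2 * (w ^ 4 + 2 * w ^ 2 * ν ^ 2)) := by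
  have hξ_meas := aemeasurable_of_map_eq_gaussianReal hξ
  have hmap : mgf (fun a ↦ (ν + w * ξ a) ^ 2) μ (-c) =
      ∫ y, exp (-(c * (ν + w * y) ^ 2)) ∂gaussianReal 0 1 := by
    rw [← hξ, integral_map hξ_meas (by fun_prop), mgf]
    simp only [neg_mul]
  rw [hmap, integral_exp_neg_mul_sq_affine_gaussianReal (by positivity)]
  exact exp_neg_div_div_sqrt_le hc

variable {ι : Type*} [Fintype ι] {ξ : ι → Ω → ℝ}

lemma mgf_neg_sum_sq_affine_le (hindep : iIndepFun ξ μ)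
    (hlaw : ∀ j, μ.map (ξ j) = gaussianReal 0 1) (ν v : ι → ℝ) {c : ℝ} (hc : 0 ≤ c) :
    mgf (fun a ↦ ∑ j, (ν j + v j * ξ j a) ^ 2) μ (-c) ≤
      exp (-c * ∑ j, (ν j ^ 2 + v j ^ 2) +
        c ^ 2 * (∑ j, v j ^ 4 + 2 * ∑ j, v j ^ 2 * ν j ^ 2)) := by
  have hsq_indep : iIndepFun (fun j a ↦ (ν j + v j * ξ j a) ^ 2) μ :=
    hindep.comp (fun j y ↦ (ν j + v j * y) ^ 2) (fun j ↦ by fun_prop)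
  have hξ_meas (j : ι) := aemeasurable_of_map_eq_gaussianReal (hlaw j)
  calc mgf (fun a ↦ ∑ j, (ν j + v j * ξ j a) ^ 2) μ (-c)
      = ∏ j, mgf (fun a ↦ (ν j + v j * ξ j a) ^ 2) μ (-c) := by
        rw [← hsq_indep.mgf_sum₀ fun j ↦ by fun_prop]
        congr 1
        ext a
        simp
    _ ≤ ∏ j, exp (-c * (ν j ^ 2 + v j ^ 2) + c ^ 2 * (v j ^ 4 + 2 * v j ^ 2 * ν j ^ 2)) :=
        Finset.prod_le_prod (fun j _ ↦ mgf_nonneg) fun j _ ↦ mgf_neg_sq_affine_le (hlaw j) _ _ hc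
    _ = _ := by
        rw [← exp_sum]
        congr 1
        simp only [mul_add, Finset.mul_sum, ← Finset.sum_add_distrib]
        exact Finset.sum_congr rfl fun j _ ↦ by ring

lemma measure_sum_sq_affine_le_sub_le [IsProbabilityMeasure μ] (hindep : iIndepFun ξ μ)
    (hlaw : ∀ j, μ.map (ξ j) = gaussianReal 0 1) (ν v : ι → ℝ) {c : ℝ} (hc : 0 ≤ c) (t : ℝ) :
    μ {a | ∑ j, (ν j + v j * ξ j a) ^ 2 ≤ ∑ j, (ν j ^ 2 + v j ^ 2) - t} ≤
      ENNReal.ofReal (exp (-c * t + c ^ 2 * (∑ j, v j ^ 4 + 2 * ∑ j, v j ^ 2 * ν j ^ 2))) := by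
  set X := fun a ↦ ∑ j, (ν j + v j * ξ j a) ^ 2
  have hξ_meas (j : ι) := aemeasurable_of_map_eq_gaussianReal (hlaw j)
  have hint : Integrable (fun a ↦ exp (-c * X a)) μ := by
    refine .of_bound (by fun_prop) 1 (ae_of_all _ fun a ↦ ?_)
    have : 0 ≤ X a := Finset.sum_nonneg fun j _ ↦ sq_nonneg _
    rw [norm_of_nonneg (exp_nonneg _), exp_le_one_iff]
    nlinarith
  set m := ∑ j, (ν j ^ 2 + v j ^ 2)
  set S := ∑ j, v j ^ 4 + 2 * ∑ j, v j ^ 2 * ν j ^ 2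
  rw [ENNReal.le_ofReal_iff_toReal_le (measure_ne_top _ _) (exp_nonneg _), ← measureReal_def]
  calc μ.real {a | X a ≤ m - t}
      ≤ exp (-(-c) * (m - t)) * mgf X μ (-c) :=
        measure_le_le_exp_mul_mgf _ (neg_nonpos.2 hc) hint
    _ ≤ exp (-(-c) * (m - t)) * exp (-c * m + c ^ 2 * S) := by
        gcongr
        exact mgf_neg_sum_sq_affine_le hindep hlaw ν v hc
    _ = exp (-c * t + c ^ 2 * S) := by
        rw [← exp_add]
        ring_nf

end GaussianSquares

theorem chi_square_lower_deviation_general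
    {Ω : Type*} [MeasureSpace Ω] (μ : Measure Ω) [IsProbabilityMeasure μ]
    (D : ℕ) (ω : Fin D → Ω → ℝ) (ν v : Fin D → ℝ)
    (hindep : iIndepFun ω μ)
    (hlaw : ∀ j, Measure.map (ω j) μ = gaussianReal 0 1)
    (T : Ω → ℝ) (hT : ∀ a, T a = ∑ j, (ν j + v j * ω j a) ^ 2)
    (S : ℝ) (hS : S = ∑ j, (v j) ^ 4 + 2 * ∑ j, (v j) ^ 2 * (ν j) ^ 2)
    (x : ℝ) (hx : 0 < x) :
    μ {a | T a - (∑ j, ((ν j) ^ 2 + (v j) ^ 2)) < -(2 * Real.sqrt (S * x))} ≤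
      ENNReal.ofReal (Real.exp (-x)) := by
  have hv4 : 0 ≤ ∑ j, v j ^ 4 := by positivity
  have hv2ν2 : 0 ≤ ∑ j, v j ^ 2 * ν j ^ 2 := by positivity
  rcases (show 0 ≤ S by linarith).eq_or_lt with hS0 | hSpos
  · have hv4_zero : ∑ j, v j ^ 4 = 0 := by linarith
    have hv (j : Fin D) : v j = 0 :=
      pow_eq_zero_iff four_ne_zero |>.1 <| congrFun
        ((Fintype.sum_eq_zero_iff_of_nonneg fun j ↦ by positivity).1 hv4_zero) j
    have hempty : {a | T a - ∑ j, (ν j ^ 2 + v j ^ 2) < -(2 * √(S * x))} = ∅ := by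
      ext a
      simp [hT, hv, ← hS0]
    simp [hempty]
  · set c := √(x / S)
    have hcS : c ^ 2 * S = x := by rw [sq_sqrt (by positivity)]; field_simp
    have hc_sqrt : c * √(S * x) = x := by
      rw [← sqrt_mul (by positivity), show x / S * (S * x) = x ^ 2 by field_simp, sqrt_sq hx.le]
    have key := measure_sum_sq_affine_le_sub_le hindep hlaw ν v (sqrt_nonneg (x / S)) (2 * √(S * x))
    rw [← hS, show -c * (2 * √(S * x)) + c ^ 2 * S = -x by linarith] at key
    refine le_trans (measure_mono fun a ha ↦ ?_) key
    simp only [Set.mem_ofPred_eq, hT] at ha ⊢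
    linarith

theorem chi_square_lower_deviation
    {Ω : Type*} [MeasureSpace Ω] (μ : Measure Ω) [IsProbabilityMeasure μ]
    (D : ℕ) (hD : 0 < D) (ω : Fin D → Ω → ℝ) (ν v : Fin D → ℝ)
    (hindep : iIndepFun ω μ)
    (hlaw : ∀ j, Measure.map (ω j) μ = gaussianReal 0 1)
    (T : Ω → ℝ) (hT : ∀ a, T a = ∑ j, (ν j + v j * ω j a) ^ 2)
    (S : ℝ) (hS : S = ∑ j, (v j) ^ 4 + 2 * ∑ j, (v j) ^ 2 * (ν j) ^ 2)
    (x : ℝ) (hx : 0 < x) :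
    μ {a | T a - (∑ j, ((ν j) ^ 2 + (v j) ^ 2)) < -(2 * Real.sqrt (S * x))} ≤
      ENNReal.ofReal (Real.exp (-x)) :=
  chi_square_lower_deviation_general μ D ω ν v hindep hlaw T hT S hS x hx
end

section
/- Let s, t > 0 with s ≤ t and let σ ∈ (0,1). If M₂ is a natural number with exp(−M₂ t) ≥ σ ≥ exp(−(M₂+1)t) (i.e., M₂ ≍ (1/t) ln(1/σ)), and a_j = j^s, b_j = exp(−jt), then σ² · max_{1≤D≤M₂} b_D^{−2} a_D^{−2} ≥ σ² b_{M₂}^{−2} a_{M₂}^{−2} ≥ c · (ln(1/σ))^{−2s} for a constant c depending only on s,t. -/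
open Real Finset

theorem lower_rate_severely_ordinary (s t : ℝ) (hs : 0 < s) (hst : s ≤ t) :
    ∃ c : ℝ, 0 < c ∧ ∀ σ : ℝ, σ ∈ Set.Ioo (0 : ℝ) 1 → ∀ M₂ : ℕ, ∀ hM : 1 ≤ M₂,
      Real.exp (-(M₂ : ℝ) * t) ≥ σ → σ ≥ Real.exp (-((M₂ : ℝ) + 1) * t) →
      σ ^ 2 * (Finset.Icc 1 M₂).sup' (Finset.nonempty_Icc.mpr hM)
          (fun D => (Real.exp (-(D : ℝ) * t))⁻¹ ^ 2 * ((D : ℝ) ^ s)⁻¹ ^ 2) ≥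
        σ ^ 2 * (Real.exp (-(M₂ : ℝ) * t))⁻¹ ^ 2 * ((M₂ : ℝ) ^ s)⁻¹ ^ 2 ∧
      σ ^ 2 * (Real.exp (-(M₂ : ℝ) * t))⁻¹ ^ 2 * ((M₂ : ℝ) ^ s)⁻¹ ^ 2 ≥
        c * (Real.log (1 / σ)) ^ (-(2 * s)) := by
  have ht : 0 < t := lt_of_lt_of_le hs hst
  refine ⟨Real.exp (-(2*t)) * t ^ (2*s), by positivity, ?_⟩
  intro σ hσ M₂ hM h1 h2
  have hσ0 := hσ.1
  have hM₂ : (1:ℝ) ≤ (M₂:ℝ) := by exact_mod_cast hM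
  have hM₂0 : (0:ℝ) < (M₂:ℝ) := by linarith
  constructor
  · rw [mul_assoc]
    exact mul_le_mul_of_nonneg_left
      (Finset.le_sup' (f := fun D : ℕ => (Real.exp (-(D : ℝ) * t))⁻¹ ^ 2 * ((D : ℝ) ^ s)⁻¹ ^ 2)
        (Finset.mem_Icc.mpr ⟨hM, le_refl M₂⟩)) (by positivity)
  · set L := Real.log (1 / σ) with hLdef
    have hlog : (M₂:ℝ) * t ≤ L := by
      have := Real.log_le_log hσ0 h1
      rw [Real.log_exp] at this
      have hL : L = -Real.log σ := by rw [hLdef, one_div, Real.log_inv]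
      linarith
    have hLpos : 0 < L := lt_of_lt_of_le (by nlinarith) hlog
    have hMleL : (M₂:ℝ) ≤ L / t := (le_div_iff₀ ht).mpr hlog
    -- rewrite the exp factor
    have e1 : (Real.exp (-(M₂:ℝ)*t))⁻¹ ^ 2 = Real.exp (2*((M₂:ℝ)*t)) := by
      rw [← Real.exp_neg, sq, ← Real.exp_add]
      ring_nf
    have e2 : ((M₂:ℝ) ^ s)⁻¹ ^ 2 = (M₂:ℝ) ^ (-(2*s)) := by
      rw [← Real.rpow_neg hM₂0.le, sq, ← Real.rpow_add hM₂0]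
      ring_nf
    rw [e1, e2]
    have key1 : Real.exp (-(2*t)) ≤ σ ^ 2 * Real.exp (2*((M₂:ℝ)*t)) := by
      have hσsq : Real.exp (-((M₂:ℝ)+1)*t) ^ 2 ≤ σ ^ 2 := by
        apply pow_le_pow_left₀ (Real.exp_pos _).le h2
      calc Real.exp (-(2*t)) = Real.exp (-((M₂:ℝ)+1)*t) ^ 2 * Real.exp (2*((M₂:ℝ)*t)) := by
            rw [sq, ← Real.exp_add, ← Real.exp_add]; ring_nf
        _ ≤ σ ^ 2 * Real.exp (2*((M₂:ℝ)*t)) :=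
            mul_le_mul_of_nonneg_right hσsq (Real.exp_pos _).le
    have key2 : t ^ (2*s) * L ^ (-(2*s)) ≤ (M₂:ℝ) ^ (-(2*s)) := by
      have h3 : (L/t) ^ (-(2*s)) ≤ (M₂:ℝ) ^ (-(2*s)) :=
        Real.rpow_le_rpow_of_nonpos hM₂0 hMleL (by linarith)
      have h4 : (L/t) ^ (-(2*s)) = t ^ (2*s) * L ^ (-(2*s)) := by
        rw [Real.div_rpow hLpos.le ht.le, Real.rpow_neg ht.le]
        field_simp
      linarith [h4 ▸ h3]
    calc Real.exp (-(2*t)) * t ^ (2*s) * L ^ (-(2*s))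
        ≤ (σ ^ 2 * Real.exp (2*((M₂:ℝ)*t))) * (t ^ (2*s) * L ^ (-(2*s))) := by
          rw [mul_assoc]
          exact mul_le_mul_of_nonneg_right key1 (by positivity)
      _ ≤ (σ ^ 2 * Real.exp (2*((M₂:ℝ)*t))) * (M₂:ℝ) ^ (-(2*s)) :=
          mul_le_mul_of_nonneg_left key2 (by positivity)
      _ = σ ^ 2 * Real.exp (2*((M₂:ℝ)*t)) * (M₂:ℝ) ^ (-(2*s)) := rfl
end

section
/- Let t > 0 and σ ∈ (0, σ₀) for σ₀ small enough. Define M₁ = inf{j ∈ ℕ : exp(−jt) ≤ σ·16√(ln(κ j²/α))} for fixed κ ≥ e, α ∈ (0,1). Then (1/t) ln(1/(σ√(ln(1/σ)))) ≤ M₁ ≤ (1/t) ln(1/σ) for all sufficiently small σ. -/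
open Real

set_option maxHeartbeats 800000 in
theorem bandwidth_order_severely (t κ α : ℝ) (ht : 0 < t)
    (hκ : Real.exp 1 ≤ κ) (hα : α ∈ Set.Ioo (0 : ℝ) 1) :
    ∃ σ₀ ∈ Set.Ioo (0 : ℝ) 1, ∀ σ : ℝ, 0 < σ → σ < σ₀ →
      ∀ M₁ : ℕ,
        M₁ = sInf {j : ℕ | Real.exp (-(j : ℝ) * t) ≤
            σ * (16 * Real.sqrt (Real.log (κ * (j : ℝ) ^ 2 / α)))} →
        (1 / t) * Real.log (1 / (σ * Real.sqrt (Real.log (1 / σ)))) ≤ (M₁ : ℝ) ∧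
          (M₁ : ℝ) ≤ (1 / t) * Real.log (1 / σ) := by
  obtain ⟨hα0, hα1⟩ := hα
  have hκ0 : (0:ℝ) < κ := lt_of_lt_of_le (Real.exp_pos 1) hκ
  have he1 : (1:ℝ) ≤ Real.exp 1 := Real.one_le_exp (by norm_num)
  have hκ1 : (1:ℝ) ≤ κ := le_trans he1 hκ
  set R : ℝ := Real.exp (Real.exp (2 * t)) with hR
  have hR1 : (1:ℝ) ≤ R := Real.one_le_exp (Real.exp_pos _).le
  set y₀ : ℝ := max (max ((2048:ℝ) ^ 2) (512 * (Real.log (κ / α) - 2 * Real.log t)))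
      (max (t * (R + 1)) 2) with hy₀def
  have hy₀2 : (2:ℝ) ≤ y₀ := le_max_of_le_right (le_max_right _ _)
  refine ⟨Real.exp (-y₀), ⟨Real.exp_pos _, by rw [Real.exp_lt_one_iff]; linarith⟩, ?_⟩
  intro σ hσ hσ₀ M₁ hM₁
  subst hM₁
  set y := Real.log (1 / σ) with hy
  have hylogσ : Real.log σ = -y := by
    rw [hy, one_div, Real.log_inv]; ring
  clear_value y
  have hyy₀ : y₀ < y := by
    have h := Real.log_lt_log hσ hσ₀
    rw [Real.log_exp] at h
    linarith [hylogσ]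
  have hy2 : (2:ℝ) < y := lt_of_le_of_lt hy₀2 hyy₀
  have hy0 : (0:ℝ) < y := by linarith
  have hyt : t * (R + 1) < y := lt_of_le_of_lt (le_max_of_le_right (le_max_left _ _)) hyy₀
  have hy2048 : (2048:ℝ) ^ 2 < y := lt_of_le_of_lt (le_max_of_le_left (le_max_left _ _)) hyy₀
  have hyκ : 512 * (Real.log (κ / α) - 2 * Real.log t) < y :=
    lt_of_le_of_lt (le_max_of_le_left (le_max_right _ _)) hyy₀
  set U : ℝ := y / t with hU
  have hU0 : 0 < U := div_pos hy0 ht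
  have hUt : U * t = y := div_mul_cancel₀ y ht.ne'
  have hRU : R + 1 ≤ U := by
    rw [hU, le_div_iff₀ ht]
    linarith [mul_comm (R + 1) t]
  clear_value U
  set j : ℕ := Nat.floor U with hj
  have hjU : (j:ℝ) ≤ U := Nat.floor_le hU0.le
  have hjlb : U - 1 < (j:ℝ) := by
    have := Nat.lt_floor_add_one U
    linarith
  clear_value j
  clear hj
  have hRj : R ≤ (j:ℝ) := by linarith
  have hj1 : (1:ℝ) ≤ (j:ℝ) := le_trans hR1 hRj
  have hκα : κ ≤ κ / α := by
    rw [le_div_iff₀ hα0]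
    exact mul_le_of_le_one_right hκ0.le hα1.le
  -- general log lower bound
  have keylog : ∀ x : ℝ, 1 ≤ x → 2 * Real.log x ≤ Real.log (κ * x ^ 2 / α) := by
    intro x hx
    have hx0 : (0:ℝ) < x := by linarith
    have h1 : x ^ 2 ≤ κ * x ^ 2 / α := by
      rw [le_div_iff₀ hα0]
      calc x ^ 2 * α ≤ x ^ 2 * 1 := mul_le_mul_of_nonneg_left hα1.le (sq_nonneg x)
        _ = 1 * x ^ 2 := by ring
        _ ≤ κ * x ^ 2 := mul_le_mul_of_nonneg_right hκ1 (sq_nonneg x)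
    have h2 : Real.log (x ^ 2) ≤ Real.log (κ * x ^ 2 / α) :=
      Real.log_le_log (by positivity) h1
    rwa [Real.log_pow, Nat.cast_ofNat] at h2
  -- bound on sqrt of log at j
  have hlogj : Real.exp (2 * t) ≤ Real.log (j:ℝ) := by
    have := Real.log_le_log (Real.exp_pos _) hRj
    rwa [Real.log_exp] at this
  have hXj : Real.exp (2 * t) ≤ Real.log (κ * (j:ℝ) ^ 2 / α) := by
    have h1 := keylog (j:ℝ) hj1
    have h2 := (Real.exp_pos (2 * t)).le
    linarith
  have hsqrtj : Real.exp t ≤ Real.sqrt (Real.log (κ * (j:ℝ) ^ 2 / α)) := by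
    have h1 : Real.sqrt (Real.exp (2 * t)) ≤ Real.sqrt (Real.log (κ * (j:ℝ) ^ 2 / α)) :=
      Real.sqrt_le_sqrt hXj
    have h2 : Real.sqrt (Real.exp (2 * t)) = Real.exp t := by
      rw [show 2 * t = t + t by ring, Real.exp_add, ← sq, Real.sqrt_sq (Real.exp_pos t).le]
    linarith
  -- j is in the set
  have hjmem : Real.exp (-(j:ℝ) * t) ≤
      σ * (16 * Real.sqrt (Real.log (κ * (j:ℝ) ^ 2 / α))) := by
    have h1 : Real.exp (-(j:ℝ) * t) ≤ Real.exp (t - y) := by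
      apply Real.exp_le_exp.mpr
      have ha : (U - 1) * t ≤ (j:ℝ) * t := mul_le_mul_of_nonneg_right hjlb.le ht.le
      have hb : (U - 1) * t = y - t := by rw [sub_mul, hUt, one_mul]
      linarith
    have h2 : Real.exp (t - y) = σ * Real.exp t := by
      rw [show t - y = -y + t by ring, Real.exp_add, ← hylogσ, Real.exp_log hσ]
    have h3 : σ * Real.exp t ≤ σ * (16 * Real.sqrt (Real.log (κ * (j:ℝ) ^ 2 / α))) := by
      have hs : (0:ℝ) ≤ Real.sqrt (Real.log (κ * (j:ℝ) ^ 2 / α)) := Real.sqrt_nonneg _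
      apply mul_le_mul_of_nonneg_left _ hσ.le
      linarith [hsqrtj, hs]
    calc Real.exp (-(j:ℝ) * t) ≤ Real.exp (t - y) := h1
      _ = σ * Real.exp t := h2
      _ ≤ _ := h3
  set S : Set ℕ := {j : ℕ | Real.exp (-(j : ℝ) * t) ≤
      σ * (16 * Real.sqrt (Real.log (κ * (j : ℝ) ^ 2 / α)))} with hS
  have hjS : j ∈ S := hjmem
  have hne : S.Nonempty := ⟨j, hjS⟩
  have hInfle : sInf S ≤ j := Nat.sInf_le hjS
  have hmem : sInf S ∈ S := Nat.sInf_mem hne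
  set M : ℕ := sInf S with hM
  have hMmem : Real.exp (-(M:ℝ) * t) ≤
      σ * (16 * Real.sqrt (Real.log (κ * (M:ℝ) ^ 2 / α))) := hmem
  clear_value M
  clear hM hmem hne hjS hjmem hS S
  have hM1 : 1 ≤ M := by
    by_contra h
    have h0 : M = 0 := by omega
    rw [h0] at hMmem
    norm_num [Real.log_zero] at hMmem
  have hM1r : (1:ℝ) ≤ (M:ℝ) := by exact_mod_cast hM1
  have hM2 : (1:ℝ) ≤ (M:ℝ) ^ 2 := one_le_pow₀ hM1r
  have hMU : (M:ℝ) ≤ U := le_trans (by exact_mod_cast hInfle) hjU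
  -- upper bound
  have hupper : (M:ℝ) ≤ (1 / t) * y := by
    have : (1 / t) * y = U := by rw [hU]; ring
    linarith
  refine ⟨?_, hupper⟩
  -- lower bound
  set X := Real.log (κ * (M:ℝ) ^ 2 / α) with hX
  have hexpM : Real.exp 1 ≤ κ * (M:ℝ) ^ 2 / α := by
    have h2 : κ ≤ κ * (M:ℝ) ^ 2 / α := by
      rw [le_div_iff₀ hα0]
      calc κ * α ≤ κ * 1 := mul_le_mul_of_nonneg_left hα1.le hκ0.le
        _ = κ := mul_one κ
        _ = κ * 1 * 1 := by ring
        _ ≤ κ * (M:ℝ) ^ 2 * 1 := by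
            apply mul_le_mul_of_nonneg_right _ (by norm_num)
            exact mul_le_mul_of_nonneg_left hM2 hκ0.le
        _ = κ * (M:ℝ) ^ 2 := mul_one _
    linarith
  have hX1 : (1:ℝ) ≤ X := by
    have := Real.log_le_log (Real.exp_pos 1) hexpM
    rwa [Real.log_exp] at this
  have hXpos : (0:ℝ) < X := by linarith
  have hXU : X ≤ Real.log (κ * U ^ 2 / α) := by
    apply Real.log_le_log (by positivity)
    gcongr
  have hlogU : Real.log (κ * U ^ 2 / α) =
      Real.log (κ / α) + 2 * Real.log y - 2 * Real.log t := by
    have h1 : κ * U ^ 2 / α = (κ / α) * (y / t) ^ 2 := by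
      rw [hU]; ring
    rw [h1, Real.log_mul (by positivity) (by positivity), Real.log_pow,
      Real.log_div hy0.ne' ht.ne']
    push_cast
    ring
  have hsy : (2048:ℝ) ≤ Real.sqrt y := by
    have h := Real.sqrt_le_sqrt hy2048.le
    rwa [Real.sqrt_sq (by norm_num : (0:ℝ) ≤ 2048)] at h
  have hyy : Real.sqrt y * Real.sqrt y = y := Real.mul_self_sqrt hy0.le
  have hlogy : 2 * Real.log y ≤ y / 512 := by
    have h1 : Real.log y = 2 * Real.log (Real.sqrt y) := by
      rw [Real.log_sqrt hy0.le]; ring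
    have h2 : Real.log (Real.sqrt y) ≤ Real.sqrt y - 1 :=
      Real.log_le_sub_one_of_pos (by positivity)
    have h3 : 2048 * Real.sqrt y ≤ Real.sqrt y * Real.sqrt y :=
      mul_le_mul_of_nonneg_right hsy (Real.sqrt_nonneg y)
    rw [hyy] at h3
    linarith
  have hX256 : X ≤ y / 256 := by
    have h := hXU
    rw [hlogU] at h
    linarith
  have hlogX : Real.log X ≤ Real.log y - Real.log 256 := by
    have h1 : Real.log X ≤ Real.log (y / 256) := Real.log_le_log hXpos hX256
    rwa [Real.log_div hy0.ne' (by norm_num)] at h1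
  have hlog256 : Real.log 256 = 2 * Real.log 16 := by
    rw [show (256:ℝ) = 16 ^ 2 by norm_num, Real.log_pow]
    norm_num
  have hlogmem : -(M:ℝ) * t ≤ Real.log σ + (Real.log 16 + Real.log X / 2) := by
    have h1 := Real.log_le_log (Real.exp_pos _) hMmem
    rwa [Real.log_exp, Real.log_mul hσ.ne' (by positivity),
      Real.log_mul (by norm_num) (by positivity), Real.log_sqrt hXpos.le] at h1
  have hMt : y - Real.log y / 2 ≤ t * (M:ℝ) := by
    rw [hylogσ] at hlogmem
    have hc : t * (M:ℝ) = (M:ℝ) * t := mul_comm t (M:ℝ)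
    linarith
  have hloggoal : Real.log (1 / (σ * Real.sqrt y)) = y - Real.log y / 2 := by
    rw [one_div, Real.log_inv, Real.log_mul hσ.ne' (by positivity),
      Real.log_sqrt hy0.le, hylogσ]
    ring
  rw [hloggoal, div_mul_eq_mul_div, one_mul, div_le_iff₀ ht]
  have hc : t * (M:ℝ) = (M:ℝ) * t := mul_comm t (M:ℝ)
  linarith
end
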